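/- arXiv:2501.11718 — 5 statements merged into one kernel-verified Lean document; each statement's English description precedes it below -/
import Mathlib

section
/- For fixed integers 1 ≤ j ≤ i ≤ n, the number of weakly increasing parking functions α of length n with αᵢ = j is ((i−j+1)(i−j+2))/(i(n−j+2)) · binom(i+j−2, j−1) · binom(2n−i−j+1, n−i). -/
/-- Sequences weakly increasing with `f k ≤ k + c`. -/
def SF (m c : ℕ) : Type := {f : Fin m → ℕ // Monotone f ∧ ∀ k : Fin m, f k ≤ (k : ℕ) + c}

/-- Sequences weakly increasing with `f k ≤ k` and `f k ≤ J`. -/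
def SG (m J : ℕ) : Type := {f : Fin m → ℕ // Monotone f ∧ ∀ k : Fin m, f k ≤ (k : ℕ) ∧ f k ≤ J}

instance SF.finite (m c : ℕ) : Finite (SF m c) := by
  apply Finite.of_injective (fun f : SF m c => (fun k => (⟨f.1 k, by
    have := f.2.2 k; have := k.2; omega⟩ : Fin (m + c + 1)) : Fin m → Fin (m + c + 1)))
  intro f g h
  apply Subtype.ext; funext k
  exact congrArg Fin.val (congrFun h k)

instance SG.finite (m J : ℕ) : Finite (SG m J) := by
  apply Finite.of_injective (fun f : SG m J => (fun k => (⟨f.1 k, by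
    have := (f.2.2 k).2; omega⟩ : Fin (J + 1)) : Fin m → Fin (J + 1)))
  intro f g h
  apply Subtype.ext; funext k
  exact congrArg Fin.val (congrFun h k)

noncomputable def Fc (m c : ℕ) : ℕ := Nat.card (SF m c)
noncomputable def Gc (m J : ℕ) : ℕ := Nat.card (SG m J)

lemma card_split {α : Type*} [Finite α] (p : α → Prop) :
    Nat.card α = Nat.card {x // p x} + Nat.card {x // ¬ p x} := by
  classical
  cases nonempty_fintype α
  rw [Nat.card_eq_fintype_card, Nat.card_eq_fintype_card, Nat.card_eq_fintype_card,
    Fintype.card_subtype_compl]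
  have := Fintype.card_subtype_le p
  omega

lemma monotone_cons {m : ℕ} {a : ℕ} {g : Fin m → ℕ} (hg : Monotone g)
    (h : ∀ k, a ≤ g k) : Monotone (Fin.cons a g : Fin (m+1) → ℕ) := by
  intro x y hxy
  rcases Fin.eq_zero_or_eq_succ x with hx | ⟨x', rfl⟩
  · subst hx
    rcases Fin.eq_zero_or_eq_succ y with hy | ⟨y', rfl⟩
    · subst hy; exact le_refl _
    · simpa using h y'
  · rcases Fin.eq_zero_or_eq_succ y with hy | ⟨y', rfl⟩
    · subst hy
      exact absurd (Fin.le_zero_iff.mp hxy) (Fin.succ_ne_zero x')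
    · simpa using hg (Fin.succ_le_succ_iff.mp hxy)

lemma Fc_zero (c : ℕ) : Fc 0 c = 1 := by
  rw [Fc, Nat.card_eq_one_iff_unique]
  constructor
  · constructor
    intro f g
    apply Subtype.ext; funext k
    exact k.elim0
  · exact ⟨⟨fun k => k.elim0, fun x => x.elim0, fun k => k.elim0⟩⟩

/-- head-zero elements of `SF (m+1) c` biject with `SF m (c+1)`. -/
def eA (m c : ℕ) : {f : SF (m+1) c // f.1 0 = 0} ≃ SF m (c+1) where
  toFun f := ⟨Fin.tail f.1.1, fun x y hxy => f.1.2.1 (Fin.succ_le_succ_iff.mpr hxy),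
    fun k => by
      have h := f.1.2.2 k.succ
      rw [Fin.val_succ] at h
      show f.1.1 k.succ ≤ (k : ℕ) + (c+1)
      omega⟩
  invFun g := ⟨⟨Fin.cons 0 g.1, monotone_cons g.2.1 (fun k => Nat.zero_le _), by
      intro k
      rcases Fin.eq_zero_or_eq_succ k with hk | ⟨k', rfl⟩
      · subst hk; simp
      · have h := g.2.2 k'
        rw [Fin.cons_succ, Fin.val_succ]
        omega⟩, by simp⟩
  left_inv f := by
    apply Subtype.ext; apply Subtype.ext
    have h0 : f.1.1 0 = 0 := f.2
    have h := Fin.cons_self_tail f.1.1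
    rw [← h, h0]
  right_inv g := by
    apply Subtype.ext
    funext k
    simp [Fin.tail_cons]

/-- head-nonzero elements of `SF (m+1) (c+1)` biject with `SF (m+1) c`. -/
def eB (m c : ℕ) : {f : SF (m+1) (c+1) // f.1 0 ≠ 0} ≃ SF (m+1) c where
  toFun f := ⟨fun k => f.1.1 k - 1, fun x y hxy => Nat.sub_le_sub_right (f.1.2.1 hxy) 1,
    fun k => by have := f.1.2.2 k; dsimp only; omega⟩
  invFun g := ⟨⟨fun k => g.1 k + 1, fun x y hxy => by have := g.2.1 hxy; dsimp only; omega,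
    fun k => by have := g.2.2 k; dsimp only; omega⟩, by dsimp only; omega⟩
  left_inv f := by
    apply Subtype.ext; apply Subtype.ext
    funext k
    have h1 : f.1.1 0 ≠ 0 := f.2
    have h2 : f.1.1 0 ≤ f.1.1 k := f.1.2.1 (Fin.zero_le k)
    dsimp only
    omega
  right_inv g := by
    apply Subtype.ext
    funext k
    dsimp only
    omega

lemma Fc_succ_zero (m : ℕ) : Fc (m+1) 0 = Fc m 1 := by
  rw [Fc, Fc]
  refine Nat.card_congr (Equiv.trans ?_ (eA m 0))
  refine (Equiv.subtypeUnivEquiv ?_).symm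
  intro f
  have := f.2.2 0
  simpa using this

lemma Fc_rec (m c : ℕ) : Fc (m+1) (c+1) = Fc (m+1) c + Fc m (c+2) := by
  have h := card_split (fun f : SF (m+1) (c+1) => f.1 0 = 0)
  rw [Nat.card_congr (eA m (c+1)), Nat.card_congr (eB m c)] at h
  rw [show c+1+1 = c+2 by omega] at h
  rw [Fc, Fc, Fc]
  rw [h]
  omega

lemma Fc_formula (m : ℕ) : ∀ c, Fc (m+1) c + (2*m+2+c).choose m = (2*m+2+c).choose (m+1) := by
  induction m with
  | zero =>
    intro c
    have h : ∀ c, Fc 1 c = c + 1 := by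
      intro c
      induction c with
      | zero => rw [Fc_succ_zero, Fc_zero]
      | succ c ih => rw [Fc_rec, Fc_zero, ih]
    rw [h]
    rw [show 2*0+2+c = c+2 by ring]
    rw [Nat.choose_zero_right, Nat.choose_one_right]
  | succ m IH =>
    intro c
    induction c with
    | zero =>
      have e1 : 2*(m+1)+2+0 = (2*m+3)+1 := by ring
      rw [e1]
      have h0 : Fc (m+1+1) 0 = Fc (m+1) 1 := Fc_succ_zero (m+1)
      have h1 := IH 1
      rw [show 2*m+2+1 = 2*m+3 by ring] at h1
      have p1 : ((2*m+3)+1).choose (m+1+1) = (2*m+3).choose (m+1) + (2*m+3).choose (m+1+1) :=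
        Nat.choose_succ_succ _ _
      have p2 : ((2*m+3)+1).choose (m+1) = (2*m+3).choose m + (2*m+3).choose (m+1) :=
        Nat.choose_succ_succ _ _
      have p3 : (2*m+3).choose (m+1+1) = (2*m+3).choose (m+1) := by
        have h := Nat.choose_symm (show m+1+1 ≤ 2*m+3 by omega)
        rw [show 2*m+3 - (m+1+1) = m+1 by omega] at h
        exact h.symm
      omega
    | succ c IHc =>
      have e1 : 2*(m+1)+2+(c+1) = (2*m+4+c)+1 := by ring
      have e2 : 2*(m+1)+2+c = 2*m+4+c := by ring
      rw [e1]
      rw [e2] at IHc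
      have hrec : Fc (m+1+1) (c+1) = Fc (m+1+1) c + Fc (m+1) (c+2) := Fc_rec (m+1) c
      have h2 := IH (c+2)
      rw [show 2*m+2+(c+2) = 2*m+4+c by ring] at h2
      have p1 : ((2*m+4+c)+1).choose (m+1+1)
          = (2*m+4+c).choose (m+1) + (2*m+4+c).choose (m+1+1) := Nat.choose_succ_succ _ _
      have p2 : ((2*m+4+c)+1).choose (m+1)
          = (2*m+4+c).choose m + (2*m+4+c).choose (m+1) := Nat.choose_succ_succ _ _
      omega

lemma monotone_snoc {m : ℕ} {a : ℕ} {g : Fin m → ℕ} (hg : Monotone g)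
    (h : ∀ k, g k ≤ a) : Monotone (Fin.snoc g a : Fin (m+1) → ℕ) := by
  intro x y hxy
  rcases Fin.eq_castSucc_or_eq_last y with ⟨y', rfl⟩ | hy
  · rcases Fin.eq_castSucc_or_eq_last x with ⟨x', rfl⟩ | hx
    · rw [Fin.snoc_castSucc, Fin.snoc_castSucc]
      exact hg (Fin.castSucc_le_castSucc_iff.mp hxy)
    · subst hx
      have h2 : Fin.last m = y'.castSucc := le_antisymm hxy (Fin.le_last _)
      rw [← h2]
  · subst hy
    rw [Fin.snoc_last]
    rcases Fin.eq_castSucc_or_eq_last x with ⟨x', rfl⟩ | hx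
    · rw [Fin.snoc_castSucc]; exact h x'
    · subst hx; rw [Fin.snoc_last]

lemma Gc_zero (J : ℕ) : Gc 0 J = 1 := by
  rw [Gc, Nat.card_eq_one_iff_unique]
  constructor
  · constructor
    intro f g
    apply Subtype.ext; funext k
    exact k.elim0
  · exact ⟨⟨fun k => k.elim0, fun x => x.elim0, fun k => k.elim0⟩⟩

lemma Gc_cap0 (m : ℕ) : Gc m 0 = 1 := by
  rw [Gc, Nat.card_eq_one_iff_unique]
  constructor
  · constructor
    intro f g
    apply Subtype.ext; funext k
    have h1 := (f.2.2 k).2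
    have h2 := (g.2.2 k).2
    omega
  · exact ⟨⟨fun _ => 0, monotone_const, fun k => ⟨Nat.zero_le _, le_refl _⟩⟩⟩

/-- elements of `SG (m+1) J` ending at the cap `J` biject with `SG m J` (for `J ≤ m`). -/
def eGA (m J : ℕ) (hJ : J ≤ m) : {f : SG (m+1) J // f.1 (Fin.last m) = J} ≃ SG m J where
  toFun f := ⟨Fin.init f.1.1,
    fun x y hxy => f.1.2.1 (Fin.castSucc_le_castSucc_iff.mpr hxy),
    fun k => by
      have h := f.1.2.2 k.castSucc
      rw [Fin.coe_castSucc] at h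
      exact h⟩
  invFun g := ⟨⟨Fin.snoc g.1 J, monotone_snoc g.2.1 (fun k => (g.2.2 k).2), by
      intro k
      rcases Fin.eq_castSucc_or_eq_last k with ⟨k', rfl⟩ | hk
      · rw [Fin.snoc_castSucc, Fin.coe_castSucc]
        exact g.2.2 k'
      · subst hk
        rw [Fin.snoc_last, Fin.val_last]
        exact ⟨hJ, le_refl _⟩⟩, by dsimp only; exact Fin.snoc_last _ _⟩
  left_inv f := by
    apply Subtype.ext; apply Subtype.ext
    have h0 : f.1.1 (Fin.last m) = J := f.2
    have h := Fin.snoc_init_self f.1.1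
    rw [← h, h0]
  right_inv g := by
    apply Subtype.ext
    funext k
    simp [Fin.init_snoc]

/-- elements of `SG (m+1) (J+1)` ending below the cap biject with `SG (m+1) J`. -/
def eGB (m J : ℕ) : {f : SG (m+1) (J+1) // f.1 (Fin.last m) ≠ J+1} ≃ SG (m+1) J where
  toFun f := ⟨f.1.1, f.1.2.1, fun k => ⟨(f.1.2.2 k).1, by
    have h1 := (f.1.2.2 (Fin.last m)).2
    have h2 := f.1.2.1 (Fin.le_last k)
    have h3 := f.2
    omega⟩⟩
  invFun g := ⟨⟨g.1, g.2.1, fun k => ⟨(g.2.2 k).1, by have := (g.2.2 k).2; omega⟩⟩, by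
    have := (g.2.2 (Fin.last m)).2
    dsimp only
    omega⟩
  left_inv f := by apply Subtype.ext; apply Subtype.ext; rfl
  right_inv g := by apply Subtype.ext; rfl

/-- at the diagonal the cap is inactive. -/
def eGC (m : ℕ) : SG (m+1) (m+1) ≃ SG (m+1) m where
  toFun f := ⟨f.1, f.2.1, fun k => ⟨(f.2.2 k).1, by have := (f.2.2 k).1; have := k.2; omega⟩⟩
  invFun g := ⟨g.1, g.2.1, fun k => ⟨(g.2.2 k).1, by have := (g.2.2 k).2; omega⟩⟩
  left_inv f := by apply Subtype.ext; rfl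
  right_inv g := by apply Subtype.ext; rfl

lemma Gc_diag (m : ℕ) : Gc (m+1) (m+1) = Gc (m+1) m := Nat.card_congr (eGC m)

lemma Gc_rec (m J : ℕ) (h : J + 1 ≤ m) :
    Gc (m+1) (J+1) = Gc (m+1) J + Gc m (J+1) := by
  have hc := card_split (fun f : SG (m+1) (J+1) => f.1 (Fin.last m) = J+1)
  rw [Nat.card_congr (eGA m (J+1) h), Nat.card_congr (eGB m J)] at hc
  rw [Gc, Gc, Gc]
  rw [hc]
  omega

lemma Gc_formula : ∀ m J, J + 1 ≤ m →
    Gc m (J+1) + (m+J+1).choose J = (m+J+1).choose (J+1) := by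
  intro m
  induction m with
  | zero => intro J hJ; omega
  | succ m IH =>
    intro J
    induction J with
    | zero =>
      intro _
      rw [Nat.choose_zero_right, show m+1+0+1 = m+2 by ring, Nat.choose_one_right]
      rcases Nat.eq_zero_or_pos m with hm | hm
      · subst hm
        rw [show (1:ℕ)+1 = 0+1+0+1 by ring]
        rw [show Gc (0+1) (0+1) = Gc (0+1) 0 from Gc_diag 0]
        rw [Gc_cap0]
      · obtain ⟨m', rfl⟩ : ∃ m', m = m' + 1 := ⟨m - 1, by omega⟩
        have hr : Gc (m'+1+1) (0+1) = Gc (m'+1+1) 0 + Gc (m'+1) (0+1) :=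
          Gc_rec (m'+1) 0 (by omega)
        have h2 := IH 0 (by omega)
        rw [Nat.choose_zero_right, show m'+1+0+1 = m'+2 by ring, Nat.choose_one_right] at h2
        rw [hr, Gc_cap0]
        omega
    | succ J IHJ =>
      intro hJ2
      rcases Nat.lt_or_ge (J+2) (m+1) with hlt | hge
      · -- J+2 ≤ m
        have hr : Gc (m+1) (J+1+1) = Gc (m+1) (J+1) + Gc m (J+1+1) :=
          Gc_rec m (J+1) (by omega)
        have h1 := IHJ (by omega)
        have h2 := IH (J+1) (by omega)
        have p1 : (m+J+3).choose (J+2) = (m+J+2).choose (J+1) + (m+J+2).choose (J+2) := by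
          rw [show m+J+3 = (m+J+2)+1 by ring, show J+2 = (J+1)+1 by ring]
          exact Nat.choose_succ_succ _ _
        have p2 : (m+J+3).choose (J+1) = (m+J+2).choose J + (m+J+2).choose (J+1) := by
          rw [show m+J+3 = (m+J+2)+1 by ring]
          exact Nat.choose_succ_succ _ _
        rw [show m+1+J+1 = m+J+2 by ring] at h1
        rw [show m+(J+1)+1 = m+J+2 by ring, show J+1+1 = J+2 by ring] at h2
        rw [show m+1+(J+1)+1 = m+J+3 by ring, show J+1+1 = J+2 by ring] at *
        omega
      · -- J+2 = m+1, i.e. m = J+1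
        have hm : m = J + 1 := by omega
        subst hm
        have hd : Gc (J+1+1) (J+1+1) = Gc (J+1+1) (J+1) := Gc_diag (J+1)
        have h1 := IHJ (by omega)
        have p1 : (2*J+4).choose (J+2) = (2*J+3).choose (J+1) + (2*J+3).choose (J+2) := by
          rw [show 2*J+4 = (2*J+3)+1 by ring, show J+2 = (J+1)+1 by ring]
          exact Nat.choose_succ_succ _ _
        have p2 : (2*J+4).choose (J+1) = (2*J+3).choose J + (2*J+3).choose (J+1) := by
          rw [show 2*J+4 = (2*J+3)+1 by ring]
          exact Nat.choose_succ_succ _ _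
        have p3 : (2*J+3).choose (J+2) = (2*J+3).choose (J+1) := by
          have h := Nat.choose_symm (show J+2 ≤ 2*J+3 by omega)
          rw [show 2*J+3 - (J+2) = J+1 by omega] at h
          exact h.symm
        rw [show J+1+1+J+1 = 2*J+3 by ring] at h1
        rw [show J+1+1+(J+1)+1 = 2*J+4 by ring, show J+1+1 = J+2 by ring] at *
        omega

variable {n a b v : ℕ}

def glue (hn : n = a + 1 + b) (v : ℕ) (p : SG a v × SF b (a + 1 - v)) (k : Fin n) : ℕ :=
  if h : (k : ℕ) < a then p.1.1 ⟨(k : ℕ), h⟩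
  else if _h2 : (k : ℕ) < a + 1 then v
  else p.2.1 ⟨(k : ℕ) - (a + 1), by have := k.2; omega⟩ + v

lemma glue_lt (hn : n = a + 1 + b) (p : SG a v × SF b (a + 1 - v)) (k : Fin n)
    (h : (k : ℕ) < a) : glue hn v p k = p.1.1 ⟨(k : ℕ), h⟩ := dif_pos h

lemma glue_eq (hn : n = a + 1 + b) (p : SG a v × SF b (a + 1 - v)) (k : Fin n)
    (h : (k : ℕ) = a) : glue hn v p k = v := by
  rw [glue, dif_neg (by omega), dif_pos (by omega)]

lemma glue_gt (hn : n = a + 1 + b) (p : SG a v × SF b (a + 1 - v)) (k : Fin n)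
    (h : a + 1 ≤ (k : ℕ)) :
    glue hn v p k = p.2.1 ⟨(k : ℕ) - (a + 1), by have := k.2; omega⟩ + v := by
  rw [glue, dif_neg (by omega), dif_neg (by omega)]

lemma glue_ub (hn : n = a + 1 + b) (hv : v ≤ a) (p : SG a v × SF b (a + 1 - v))
    (k : Fin n) : glue hn v p k ≤ (k : ℕ) := by
  rcases Nat.lt_or_ge (k : ℕ) a with h | h
  · rw [glue_lt hn p k h]
    exact (p.1.2.2 _).1
  · rcases Nat.lt_or_ge (k : ℕ) (a+1) with h2 | h2
    · rw [glue_eq hn p k (by omega)]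
      omega
    · rw [glue_gt hn p k h2]
      have hg := p.2.2.2 ⟨(k : ℕ) - (a + 1), by have := k.2; omega⟩
      simp only [Fin.val_mk] at hg
      omega

lemma glue_mono (hn : n = a + 1 + b) (hv : v ≤ a) (p : SG a v × SF b (a + 1 - v)) :
    Monotone (glue hn v p) := by
  intro x y hxy
  have hxy' : (x : ℕ) ≤ (y : ℕ) := hxy
  rcases Nat.lt_or_ge (x : ℕ) a with h | h
  · rw [glue_lt hn p x h]
    rcases Nat.lt_or_ge (y : ℕ) a with h3 | h3
    · rw [glue_lt hn p y h3]
      exact p.1.2.1 (by rw [Fin.mk_le_mk]; omega)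
    · rcases Nat.lt_or_ge (y : ℕ) (a+1) with h4 | h4
      · rw [glue_eq hn p y (by omega)]
        exact (p.1.2.2 _).2
      · rw [glue_gt hn p y h4]
        exact le_trans (p.1.2.2 _).2 (Nat.le_add_left _ _)
  · rcases Nat.lt_or_ge (x : ℕ) (a+1) with h2 | h2
    · rw [glue_eq hn p x (by omega)]
      rcases Nat.lt_or_ge (y : ℕ) (a+1) with h4 | h4
      · rw [glue_eq hn p y (by omega)]
      · rw [glue_gt hn p y h4]
        exact Nat.le_add_left _ _
    · rw [glue_gt hn p x h2, glue_gt hn p y (by omega)]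
      have := p.2.2.1 (show (⟨(x:ℕ)-(a+1), by have := x.2; omega⟩ : Fin b)
          ≤ ⟨(y:ℕ)-(a+1), by have := y.2; omega⟩ by rw [Fin.mk_le_mk]; omega)
      omega

def PkSet (n a v : ℕ) (han : a < n) : Type :=
  {α : Fin n → Fin n // (Monotone α ∧ ∀ k, (α k : ℕ) ≤ (k : ℕ)) ∧ (α ⟨a, han⟩ : ℕ) = v}

def mainTo (hn : n = a + 1 + b) (hv : v ≤ a) (α : PkSet n a v (by omega)) :
    SG a v × SF b (a + 1 - v) :=
  (⟨fun k => (α.1 ⟨(k : ℕ), by omega⟩ : ℕ),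
    by
      intro x y hxy
      exact α.2.1.1 (show (⟨(x:ℕ), by omega⟩ : Fin n) ≤ ⟨(y:ℕ), by omega⟩ from hxy),
    by
      intro k
      dsimp only
      have hb := α.2.1.2 (⟨(k : ℕ), by omega⟩ : Fin n)
      simp only [Fin.val_mk] at hb
      refine ⟨hb, ?_⟩
      have h2 : ((α.1 ⟨(k:ℕ), by omega⟩ : Fin n) : ℕ) ≤ ((α.1 ⟨a, by omega⟩ : Fin n) : ℕ) :=
        α.2.1.1 (by rw [Fin.mk_le_mk]; omega)
      have h3 := α.2.2
      omega⟩,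
   ⟨fun k => (α.1 ⟨a + 1 + (k : ℕ), by omega⟩ : ℕ) - v,
    by
      intro x y hxy
      dsimp only
      have hxy' : (x:ℕ) ≤ (y:ℕ) := hxy
      have h2 : ((α.1 ⟨a+1+(x:ℕ), by omega⟩ : Fin n) : ℕ)
          ≤ ((α.1 ⟨a+1+(y:ℕ), by omega⟩ : Fin n) : ℕ) :=
        α.2.1.1 (by rw [Fin.mk_le_mk]; omega)
      omega,
    by
      intro k
      dsimp only
      have h1 := α.2.1.2 ⟨a + 1 + (k : ℕ), by omega⟩
      simp only [Fin.val_mk] at h1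
      omega⟩)

lemma mainTo_fst (hn : n = a + 1 + b) (hv : v ≤ a) (α : PkSet n a v (by omega)) (k : Fin a) :
    (mainTo hn hv α).1.1 k = ((α.1 ⟨(k : ℕ), by omega⟩ : Fin n) : ℕ) := rfl

lemma mainTo_snd (hn : n = a + 1 + b) (hv : v ≤ a) (α : PkSet n a v (by omega)) (k : Fin b) :
    (mainTo hn hv α).2.1 k = ((α.1 ⟨a + 1 + (k : ℕ), by omega⟩ : Fin n) : ℕ) - v := rfl

def mainInv (hn : n = a + 1 + b) (hv : v ≤ a) (p : SG a v × SF b (a + 1 - v)) :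
    PkSet n a v (by omega) :=
  ⟨fun k => ⟨glue hn v p k, lt_of_le_of_lt (glue_ub hn hv p k) k.2⟩,
    ⟨fun x y hxy => glue_mono hn hv p hxy, fun k => glue_ub hn hv p k⟩,
    by
      show glue hn v p _ = v
      exact glue_eq hn p _ rfl⟩

lemma mainInv_apply (hn : n = a + 1 + b) (hv : v ≤ a) (p : SG a v × SF b (a + 1 - v))
    (k : Fin n) : (((mainInv hn hv p).1 k : Fin n) : ℕ) = glue hn v p k := rfl

lemma main_left (hn : n = a + 1 + b) (hv : v ≤ a) (α : PkSet n a v (by omega)) :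
    mainInv hn hv (mainTo hn hv α) = α := by
  apply Subtype.ext
  funext k
  apply Fin.ext
  rw [mainInv_apply]
  rcases Nat.lt_or_ge (k : ℕ) a with h | h
  · rw [glue_lt _ _ k h, mainTo_fst]
  · rcases Nat.lt_or_ge (k : ℕ) (a+1) with h2 | h2
    · rw [glue_eq _ _ k (by omega)]
      have h3 := α.2.2
      have h4 : (⟨a, by omega⟩ : Fin n) = k := by
        apply Fin.ext
        simp only [Fin.val_mk]
        omega
      rw [← h4]
      exact h3.symm
    · rw [glue_gt _ _ k h2, mainTo_snd]
      have h4 : (⟨a + 1 + (((⟨(k:ℕ) - (a+1), by have := k.2; omega⟩ : Fin b)) : ℕ),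
          by have := k.2; simp only [Fin.val_mk]; omega⟩ : Fin n) = k := by
        apply Fin.ext
        simp only [Fin.val_mk]
        omega
      rw [h4]
      have h5 : ((α.1 ⟨a, by omega⟩ : Fin n) : ℕ) ≤ ((α.1 k : Fin n) : ℕ) :=
        α.2.1.1 (by rw [Fin.le_def]; simp only [Fin.val_mk]; omega)
      have h3 := α.2.2
      omega

lemma main_right (hn : n = a + 1 + b) (hv : v ≤ a) (p : SG a v × SF b (a + 1 - v)) :
    mainTo hn hv (mainInv hn hv p) = p := by
  apply Prod.ext
  · apply Subtype.ext
    funext k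
    rw [mainTo_fst]
    rw [mainInv_apply]
    rw [glue_lt hn p _ (by simp only [Fin.val_mk]; exact k.2)]
  · apply Subtype.ext
    funext k
    rw [mainTo_snd]
    rw [mainInv_apply]
    rw [glue_gt hn p _ (by simp only [Fin.val_mk]; omega)]
    have h4 : (⟨(((⟨a + 1 + (k:ℕ), by omega⟩ : Fin n) : ℕ)) - (a+1), by
        have := k.2; simp only [Fin.val_mk]; omega⟩ : Fin b) = k := by
      apply Fin.ext
      simp only [Fin.val_mk]
      omega
    rw [h4]
    omega

def mainEquiv (n a b v : ℕ) (hn : n = a + 1 + b) (hv : v ≤ a) :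
    PkSet n a v (by omega) ≃ SG a v × SF b (a + 1 - v) where
  toFun := mainTo hn hv
  invFun := mainInv hn hv
  left_inv := main_left hn hv
  right_inv := main_right hn hv

lemma Fc_q (m c : ℕ) : (Fc m c : ℚ) * (m + c + 1) = (c + 1) * ((2*m+c).choose m) := by
  cases m with
  | zero =>
    rw [Fc_zero]
    rw [show 2*0+c = c by ring, Nat.choose_zero_right]
    push_cast
    ring
  | succ m =>
    have h := Fc_formula m c
    have hr := Nat.choose_succ_right_eq (2*m+2+c) m
    rw [show 2*m+2+c-m = m+c+2 by omega] at hr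
    rw [show 2*(m+1)+c = 2*m+2+c by ring]
    have hq1 : (Fc (m+1) c : ℚ) + ((2*m+2+c).choose m : ℚ) = ((2*m+2+c).choose (m+1) : ℚ) := by
      exact_mod_cast h
    have hq2 : ((2*m+2+c).choose (m+1) : ℚ) * (m+1) = ((2*m+2+c).choose m : ℚ) * (m+c+2) := by
      exact_mod_cast hr
    push_cast
    push_cast at hq1 hq2
    linear_combination ((m:ℚ)+c+2) * hq1 + hq2

lemma Gc_q (m J : ℕ) (h : J ≤ m) :
    (Gc m J : ℚ) * (m+1) = ((m:ℚ)+1-J) * ((m+J).choose J) := by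
  cases J with
  | zero =>
    rw [Gc_cap0]
    rw [show m+0 = m by ring, Nat.choose_zero_right]
    push_cast
    ring
  | succ J =>
    have hf := Gc_formula m J h
    have hr := Nat.choose_succ_right_eq (m+J+1) J
    rw [show m+J+1-J = m+1 by omega] at hr
    rw [show m+(J+1) = m+J+1 by ring]
    have hq1 : (Gc m (J+1) : ℚ) + ((m+J+1).choose J : ℚ) = ((m+J+1).choose (J+1) : ℚ) := by
      exact_mod_cast hf
    have hq2 : ((m+J+1).choose (J+1) : ℚ) * (J+1) = ((m+J+1).choose J : ℚ) * (m+1) := by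
      exact_mod_cast hr
    push_cast
    push_cast at hq1 hq2
    linear_combination ((m:ℚ)+1) * hq1 + hq2

/-- For `1 ≤ j ≤ i ≤ n`, the number of weakly increasing parking functions of length `n`
with `αᵢ = j` (encoded `0`-indexed) is
`((i−j+1)(i−j+2))/(i(n−j+2)) · binom(i+j−2, j−1) · binom(2n−i−j+1, n−i)`. -/
theorem stmt4 (n i j : ℕ) (h1 : 1 ≤ j) (h2 : j ≤ i) (h3 : i ≤ n) :
    (Nat.card {α : Fin n → Fin n // (Monotone α ∧ ∀ k, (α k : ℕ) ≤ (k : ℕ)) ∧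
        (α ⟨i - 1, by omega⟩ : ℕ) + 1 = j} : ℚ) =
      (((i : ℚ) - j + 1) * ((i : ℚ) - j + 2)) / ((i : ℚ) * ((n : ℚ) - j + 2)) *
        (Nat.choose (i + j - 2) (j - 1) : ℚ) *
        (Nat.choose (2 * n - i - j + 1) (n - i) : ℚ) := by
  -- arithmetic preliminaries (before any hypothesis mentioning the subtype appears)
  have hn' : n = (i-1) + 1 + (n-i) := by omega
  have hv' : j - 1 ≤ i - 1 := by omega
  have esub : (i-1) + 1 - (j-1) = i-j+1 := by omega
  have eG : (i-1) + (j-1) = i+j-2 := by omega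
  have eF : 2*(n-i)+(i-j+1) = 2*n-i-j+1 := by omega
  have ci : ((i-1 : ℕ) : ℚ) = (i : ℚ) - 1 := by
    have := Nat.cast_sub (show 1 ≤ i by omega) (R := ℚ)
    simpa using this
  have cj : ((j-1 : ℕ) : ℚ) = (j : ℚ) - 1 := by
    have := Nat.cast_sub (show 1 ≤ j by omega) (R := ℚ)
    simpa using this
  have cni : ((n-i : ℕ) : ℚ) = (n : ℚ) - i := by
    have := Nat.cast_sub h3 (R := ℚ)
    simpa using this
  have cij : ((i-j+1 : ℕ) : ℚ) = (i : ℚ) - j + 1 := by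
    have := Nat.cast_sub h2 (R := ℚ)
    push_cast
    rw [this]
  have hi0 : (0:ℚ) < (i:ℚ) := by
    exact_mod_cast (show 0 < i by omega)
  have hnj0 : (0:ℚ) < (n:ℚ) - j + 2 := by
    have : (j:ℚ) ≤ (n:ℚ) := by exact_mod_cast (show j ≤ n by omega)
    linarith
  -- the two factors, evaluated in ℚ
  have hG := Gc_q (i-1) (j-1) hv'
  rw [eG, ci, cj] at hG
  have hF := Fc_q (n-i) (i-j+1)
  rw [eF, cni, cij] at hF
  have hGv : (Gc (i-1) (j-1) : ℚ)
      = ((i:ℚ) - j + 1) * (((i+j-2).choose (j-1) : ℕ) : ℚ) / i := by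
    rw [eq_div_iff (ne_of_gt hi0)]
    linear_combination hG
  have hFv : (Fc (n-i) (i-j+1) : ℚ)
      = ((i:ℚ) - j + 2) * (((2*n-i-j+1).choose (n-i) : ℕ) : ℚ) / ((n:ℚ) - j + 2) := by
    rw [eq_div_iff (ne_of_gt hnj0)]
    linear_combination hF
  -- the bijective count
  have e0 : {α : Fin n → Fin n // (Monotone α ∧ ∀ k, (α k : ℕ) ≤ (k : ℕ)) ∧
        (α ⟨i - 1, by omega⟩ : ℕ) + 1 = j}
      ≃ {α : Fin n → Fin n // (Monotone α ∧ ∀ k, (α k : ℕ) ≤ (k : ℕ)) ∧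
        (α ⟨i - 1, by omega⟩ : ℕ) = j - 1} := by
    apply Equiv.subtypeEquivRight
    intro α
    constructor
    · rintro ⟨hm, hval⟩
      exact ⟨hm, by omega⟩
    · rintro ⟨hm, hval⟩
      exact ⟨hm, by omega⟩
  have hcard : Nat.card {α : Fin n → Fin n // (Monotone α ∧ ∀ k, (α k : ℕ) ≤ (k : ℕ)) ∧
        (α ⟨i - 1, by omega⟩ : ℕ) + 1 = j}
      = Gc (i-1) (j-1) * Fc (n-i) (i-j+1) := by
    rw [Nat.card_congr (e0.trans (mainEquiv n (i-1) (n-i) (j-1) hn' hv'))]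
    rw [Nat.card_prod]
    rw [esub]
    rfl
  rw [hcard]
  clear hcard e0
  push_cast
  push_cast at hGv hFv
  rw [hGv, hFv]
  field_simp
end

section
/- For every positive integer n, ∑_{j=0}^{n−1} j·binom(j+n−1, j) = (n−1)·n·binom(2n−1, n−1)/(n+1). -/
/-!
Writing `n = m + 1`, absorption turns each summand `j * C(j + m, j)` into
`(m + 1) * C(j + m, m + 1)`, so the hockey-stick identity sums the series to
`(m + 1) * C(2m + 1, m + 2)`; finally `(m + 2) * C(2m + 1, m + 2) = m * C(2m + 1, m)`.
-/

open Finset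

namespace Nat

theorem mul_choose_add_eq (j m : ℕ) :
    j * (j + m).choose j = (m + 1) * (j + m).choose (m + 1) := by
  have h := choose_succ_right_eq (j + m) m
  rw [Nat.add_sub_cancel] at h
  rw [choose_symm_add, Nat.mul_comm, ← h, Nat.mul_comm]

theorem sum_range_add_choose_succ (n k : ℕ) :
    ∑ j ∈ range n, (j + k).choose (k + 1) = (n + k).choose (k + 2) := by
  induction n with
  | zero => simp [choose_eq_zero_of_lt]
  | succ n ih =>
    rw [sum_range_succ, ih, Nat.add_right_comm n 1 k, choose_succ_succ' (n + k) (k + 1),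
      Nat.add_comm]

theorem sum_range_mul_choose_add (m : ℕ) :
    ∑ j ∈ range (m + 1), j * (j + m).choose j = (m + 1) * (2 * m + 1).choose (m + 2) := by
  simp_rw [mul_choose_add_eq, ← mul_sum, sum_range_add_choose_succ]
  ring_nf

theorem add_two_mul_choose_two_mul_add_one (m : ℕ) :
    (m + 2) * (2 * m + 1).choose (m + 2) = m * (2 * m + 1).choose m := by
  have h := choose_succ_right_eq (2 * m + 1) (m + 1)
  rw [choose_symm_half, show 2 * m + 1 - (m + 1) = m by omega] at h
  rw [Nat.mul_comm, h, Nat.mul_comm]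

theorem add_two_mul_sum_range_mul_choose_add (m : ℕ) :
    (m + 2) * ∑ j ∈ range (m + 1), j * (j + m).choose j =
      m * (m + 1) * (2 * m + 1).choose m := by
  rw [sum_range_mul_choose_add, Nat.mul_left_comm, add_two_mul_choose_two_mul_add_one]
  ring

end Nat

theorem stmt7_general (n : ℕ) :
    ∑ j ∈ Finset.range n, (j : ℚ) * (Nat.choose (j + n - 1) j : ℚ) =
      ((n : ℚ) - 1) * n * (Nat.choose (2 * n - 1) (n - 1) : ℚ) / ((n : ℚ) + 1) := by
  rcases n with _ | m
  · simp
  have key : ((m : ℚ) + 2) * ∑ j ∈ range (m + 1), (j : ℚ) * ((j + m).choose j : ℚ) =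
      m * (m + 1) * ((2 * m + 1).choose m : ℚ) := by
    exact_mod_cast Nat.add_two_mul_sum_range_mul_choose_add m
  rw [show 2 * (m + 1) - 1 = 2 * m + 1 by omega, Nat.add_sub_cancel]
  simp only [Nat.add_succ_sub_one]
  push_cast
  field_simp
  linarith

/-- For every positive integer `n`,
`∑_{j=0}^{n−1} j·binom(j+n−1, j) = (n−1)·n·binom(2n−1, n−1)/(n+1)`. -/
theorem stmt7 (n : ℕ) (hn : 0 < n) :
    ∑ j ∈ Finset.range n, (j : ℚ) * (Nat.choose (j + n - 1) j : ℚ) =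
      ((n : ℚ) - 1) * n * (Nat.choose (2 * n - 1) (n - 1) : ℚ) / ((n : ℚ) + 1) :=
  stmt7_general n
end

section
/- For every positive integer n, ∑_{j=0}^{n−1} j²·binom(j+n−1, j) = ((n−1)·n³/((n+1)(n+2)))·binom(2n−1, n−1). -/
open Finset

lemma hockeyN (k : ℕ) : ∀ m : ℕ, ∑ j ∈ range m, (j + k).choose k = (m + k).choose (k + 1)
  | 0 => by simp [Nat.choose_eq_zero_of_lt]
  | (m + 1) => by
      rw [sum_range_succ, hockeyN k m, show m + 1 + k = (m + k) + 1 by ring,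
        Nat.choose_succ_succ]
      simp only [Nat.succ_eq_add_one]
      omega

lemma sumA (k m : ℕ) : ∑ j ∈ range m, ((j + k).choose j : ℚ) = ((m + k).choose (k + 1) : ℚ) := by
  have h := hockeyN k m
  have : ∑ j ∈ range m, (j + k).choose j = (m + k).choose (k + 1) := by
    rw [← h]
    exact Finset.sum_congr rfl fun j _ => Nat.choose_symm_add
  exact_mod_cast congrArg (Nat.cast : ℕ → ℚ) this

lemma keyptw (k j : ℕ) :
    ((j + 1 : ℕ) : ℚ) * ((j + 1 + k).choose (j + 1) : ℚ) = (k + 1) * ((j + (k + 1)).choose j : ℚ) := by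
  have h := Nat.choose_succ_right_eq (j + k + 1) j
  have h2 : j + k + 1 - j = k + 1 := by omega
  rw [h2] at h
  have : ((j + k + 1).choose (j + 1) : ℚ) * (j + 1) = ((j + k + 1).choose j : ℚ) * (k + 1) := by
    exact_mod_cast congrArg (Nat.cast : ℕ → ℚ) h
  have e1 : j + 1 + k = j + k + 1 := by ring
  have e2 : j + (k + 1) = j + k + 1 := by ring
  rw [e1, e2]
  push_cast
  linarith [this]

lemma sumB (k : ℕ) : ∀ m : ℕ, ∑ j ∈ range m, (j : ℚ) * ((j + k).choose j : ℚ)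
    = (k + 1) * ((m + k).choose (k + 2) : ℚ)
  | 0 => by simp [Nat.choose_eq_zero_of_lt]
  | (m + 1) => by
      rw [Finset.sum_range_succ']
      simp only [Nat.cast_zero]
      have : ∑ j ∈ range m, ((j + 1 : ℕ) : ℚ) * ((j + 1 + k).choose (j + 1) : ℚ)
          = (k + 1) * ∑ j ∈ range m, ((j + (k + 1)).choose j : ℚ) := by
        rw [Finset.mul_sum]
        exact Finset.sum_congr rfl fun j _ => keyptw k j
      push_cast at this ⊢
      rw [this, sumA (k + 1) m, show m + (k + 1) = m + 1 + k by ring]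
      ring

lemma sumS (k : ℕ) : ∀ m : ℕ, ∑ j ∈ range m, (j : ℚ) ^ 2 * ((j + k).choose j : ℚ)
    = (k + 1) * ((k + 2) * ((m + k).choose (k + 3) : ℚ) + ((m + k).choose (k + 2) : ℚ))
  | 0 => by simp [Nat.choose_eq_zero_of_lt]
  | (m + 1) => by
      rw [Finset.sum_range_succ']
      simp only [Nat.cast_zero]
      have step : ∑ j ∈ range m, ((j + 1 : ℕ) : ℚ) ^ 2 * ((j + 1 + k).choose (j + 1) : ℚ)
          = (k + 1) * ∑ j ∈ range m, ((j : ℚ) + 1) * ((j + (k + 1)).choose j : ℚ) := by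
        rw [Finset.mul_sum]
        refine Finset.sum_congr rfl fun j _ => ?_
        have h := keyptw k j
        push_cast at h ⊢
        nlinarith [h]
      have split : ∑ j ∈ range m, ((j : ℚ) + 1) * ((j + (k + 1)).choose j : ℚ)
          = (∑ j ∈ range m, (j : ℚ) * ((j + (k + 1)).choose j : ℚ))
            + ∑ j ∈ range m, ((j + (k + 1)).choose j : ℚ) := by
        rw [← Finset.sum_add_distrib]
        exact Finset.sum_congr rfl fun j _ => by ring
      push_cast at step ⊢
      rw [step, split, sumB (k + 1) m, sumA (k + 1) m,
        show m + (k + 1) = m + 1 + k by ring]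
      push_cast
      ring

/-- For every positive integer `n`,
`∑_{j=0}^{n−1} j²·binom(j+n−1, j) = ((n−1)·n³/((n+1)(n+2)))·binom(2n−1, n−1)`. -/
theorem stmt8 (n : ℕ) (hn : 0 < n) :
    ∑ j ∈ Finset.range n, (j : ℚ) ^ 2 * (Nat.choose (j + n - 1) j : ℚ) =
      ((n : ℚ) - 1) * (n : ℚ) ^ 3 / (((n : ℚ) + 1) * ((n : ℚ) + 2)) *
        (Nat.choose (2 * n - 1) (n - 1) : ℚ) := by
  obtain ⟨m, rfl⟩ : ∃ m, n = m + 1 := ⟨n - 1, by omega⟩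
  have e1 : ∀ j, j + (m + 1) - 1 = j + m := fun j => by omega
  have e2 : 2 * (m + 1) - 1 = 2 * m + 1 := by omega
  have e3 : m + 1 - 1 = m := by omega
  simp only [e1, e2, e3]
  rw [sumS m (m + 1), show m + 1 + m = 2 * m + 1 by ring]
  rcases Nat.eq_zero_or_pos m with rfl | hm
  · norm_num [Nat.choose]
  -- ratio identities
  have h1 : ((2 * m + 1).choose (m + 1) : ℚ) = ((2 * m + 1).choose m : ℚ) := by
    have := Nat.choose_symm (n := 2 * m + 1) (k := m) (by omega)
    rw [show 2 * m + 1 - m = m + 1 by omega] at this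
    exact_mod_cast congrArg (Nat.cast : ℕ → ℚ) this
  have h2 : ((2 * m + 1).choose (m + 2) : ℚ) * ((m : ℚ) + 2)
      = ((2 * m + 1).choose (m + 1) : ℚ) * (m : ℚ) := by
    have h := Nat.choose_succ_right_eq (2 * m + 1) (m + 1)
    rw [show 2 * m + 1 - (m + 1) = m by omega] at h
    exact_mod_cast congrArg (Nat.cast : ℕ → ℚ) h
  have h3 : ((2 * m + 1).choose (m + 3) : ℚ) * ((m : ℚ) + 3)
      = ((2 * m + 1).choose (m + 2) : ℚ) * ((m : ℚ) - 1) := by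
    have h := Nat.choose_succ_right_eq (2 * m + 1) (m + 2)
    rw [show 2 * m + 1 - (m + 2) = m - 1 by omega, show m + 2 + 1 = m + 3 by omega] at h
    have hc : ((2 * m + 1).choose (m + 3) : ℚ) * ((m : ℚ) + 2 + 1)
        = ((2 * m + 1).choose (m + 2) : ℚ) * ((m - 1 : ℕ) : ℚ) := by
      exact_mod_cast congrArg (Nat.cast : ℕ → ℚ) h
    rw [Nat.cast_pred hm] at hc
    linarith [hc]
  have hne : (((m : ℚ) + 1) + 1) * (((m : ℚ) + 1) + 2) ≠ 0 := by positivity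
  push_cast
  field_simp
  linear_combination (((m : ℚ) + 2) ^ 2) * h3
    + ((m : ℚ) + 1) ^ 2 * h2 + ((m : ℚ) * ((m : ℚ) + 1) ^ 2) * h1
end

section
/- Under the bijection sending a weakly increasing parking function α of length n to a Dyck path of semilength n (where αᵢ = 1 + the number of down-steps before the i-th up-step), the number of lucky cars of α equals the number of returns of the Dyck path to the x-axis (counting the final return, i.e., the number of touches of the axis after the start). -/
/-!
The `i`-th up-step of the path sits at a position `p` with exactly `i` up-steps before it, so
car `i` is lucky iff the path is on the axis at time `p`. Conversely, a path that never goes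
below the axis leaves it by an up-step, so every time `t < 2n` at which the path is on the axis
is the position of an up-step. Hence lucky cars correspond to the visits of the axis at times
`0, …, 2n - 1`, and since the path is on the axis at both times `0` and `2n`, these are as many
as the returns at times `1, …, 2n`.
-/

/-- The height of a path of up-steps (`true`) and down-steps (`false`). -/
def pathHeight (P : List Bool) : ℤ := (P.count true : ℤ) - (P.count false : ℤ)

/-- The (0-based) indices of the up-steps of a path. -/
def trueIdxs : List Bool → List ℕ
  | [] => []
  | b :: l => if b then 0 :: (trueIdxs l).map (· + 1) else (trueIdxs l).map (· + 1)

open Finset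

theorem pathHeight_eq_zero_iff (l : List Bool) :
    pathHeight l = 0 ↔ l.count false = l.count true := by
  rw [pathHeight, sub_eq_zero, Nat.cast_inj, eq_comm]

theorem pathHeight_take_add_one (l : List Bool) {t : ℕ} (ht : t < l.length) :
    pathHeight (l.take (t + 1)) = pathHeight (l.take t) + if l[t] then 1 else -1 := by
  rw [List.take_add_one, List.getElem?_eq_getElem ht]
  cases l[t] <;> simp [pathHeight] <;> ring

theorem getElem_eq_true_of_pathHeight_take_eq_zero {l : List Bool}
    (hpre : ∀ t, 0 ≤ pathHeight (l.take t)) {t : ℕ} (ht : t < l.length)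
    (h0 : pathHeight (l.take t) = 0) : l[t] = true := by
  have := hpre (t + 1)
  rw [pathHeight_take_add_one l ht, h0] at this
  by_contra hf
  simp [hf] at this

theorem count_true_take_lt {l : List Bool} {t : ℕ} (ht : l[t]? = some true) :
    (l.take t).count true < l.count true := by
  have hsub := (List.take_sublist (t + 1) l).count_le true
  rw [List.take_add_one, ht] at hsub
  simpa using hsub

theorem getElem?_trueIdxs_eq_some_iff (l : List Bool) (i p : ℕ) :
    (trueIdxs l)[i]? = some p ↔ l[p]? = some true ∧ (l.take p).count true = i := by
  induction l generalizing i p with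
  | nil => simp [trueIdxs]
  | cons b l ih => cases b <;> rcases i with _ | i <;> rcases p with _ | p <;> simp [trueIdxs, ih]

theorem length_trueIdxs (l : List Bool) : (trueIdxs l).length = l.count true := by
  induction l with
  | nil => rfl
  | cons b l ih => cases b <;> simp [trueIdxs, ih]

theorem getD_trueIdxs_spec (l : List Bool) {i : ℕ} (hi : i < l.count true) :
    l[(trueIdxs l).getD i 0]? = some true ∧
      (l.take ((trueIdxs l).getD i 0)).count true = i := by
  rw [← getElem?_trueIdxs_eq_some_iff, List.getD_eq_getElem?_getD,
    List.getElem?_eq_getElem (by rwa [length_trueIdxs]), Option.getD_some]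

theorem card_upSteps_from_axis_eq_card_axis_visits {l : List Bool}
    (hpre : ∀ t, 0 ≤ pathHeight (l.take t)) :
    #{i : Fin (l.count true) | pathHeight (l.take ((trueIdxs l).getD i 0)) = 0} =
      #{t ∈ range l.length | pathHeight (l.take t) = 0} := by
  have upStep {t} (ht : t ∈ {t ∈ range l.length | pathHeight (l.take t) = 0}) :
      l[t]? = some true := by
    simp only [mem_filter, mem_range] at ht
    rw [List.getElem?_eq_getElem ht.1, getElem_eq_true_of_pathHeight_take_eq_zero hpre ht.1 ht.2]
  refine card_bij' (fun i _ => (trueIdxs l).getD i 0)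
    (fun t ht => ⟨(l.take t).count true, count_true_take_lt (upStep ht)⟩) ?_ ?_ ?_ ?_
  · intro i hi
    obtain ⟨hup, -⟩ := getD_trueIdxs_spec l i.isLt
    simp only [mem_filter, mem_univ, true_and, mem_range] at hi ⊢
    exact ⟨(List.getElem?_eq_some_iff.1 hup).1, hi⟩
  · intro t ht
    simpa [(getElem?_trueIdxs_eq_some_iff l _ t).2 ⟨upStep ht, rfl⟩] using (mem_filter.1 ht).2
  · intro i _
    exact Fin.ext (getD_trueIdxs_spec l i.isLt).2
  · intro t ht
    simp [(getElem?_trueIdxs_eq_some_iff l _ t).2 ⟨upStep ht, rfl⟩]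

theorem card_filter_range_eq_card_filter_Icc (p : ℕ → Prop) [DecidablePred p] {m : ℕ}
    (h : p 0 ↔ p m) : #{t ∈ range m | p t} = #{t ∈ Icc 1 m | p t} := by
  have hsplit := Icc_eq_cons_Ico (Nat.zero_le m)
  rw [Icc_eq_cons_Ioc (Nat.zero_le m)] at hsplit
  have hcard := congrArg (fun s => #{t ∈ s | p t}) hsplit
  rw [← Nat.Ico_zero_eq_range, ← zero_add 1, Icc_add_one_left_eq_Ioc]
  simp only [filter_cons, h] at hcard
  split_ifs at hcard <;> simp_all

/-- Under the bijection sending a Dyck path `P` of semilength `n` to the weakly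
increasing parking function `α` with `αᵢ = 1 +` (number of down-steps before the
`i`-th up-step), the number of lucky cars of `α` (indices with `αᵢ = i`) equals the
number of returns of `P` to the x-axis (touches of the axis after the start). -/
theorem stmt12 (n : ℕ) (P : List Bool)
    (hlen : P.length = 2 * n)
    (hbal : pathHeight P = 0)
    (hpre : ∀ t, 0 ≤ pathHeight (P.take t))
    (α : Fin n → ℕ)
    (hα : ∀ i : Fin n, α i = 1 + (P.take ((trueIdxs P).getD (i : ℕ) 0)).count false) :
    Nat.card {i : Fin n // α i = (i : ℕ) + 1} =
      ((Finset.Icc 1 (2 * n)).filter (fun t => pathHeight (P.take t) = 0)).card := by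
  obtain rfl : P.count true = n := by
    have := P.count_true_add_count_false
    rw [pathHeight_eq_zero_iff] at hbal
    omega
  have hlucky (i : Fin (P.count true)) :
      α i = i + 1 ↔ pathHeight (P.take ((trueIdxs P).getD i 0)) = 0 := by
    rw [hα, pathHeight_eq_zero_iff, (getD_trueIdxs_spec P i.isLt).2]
    omega
  rw [Nat.card_eq_fintype_card, Fintype.card_subtype]
  simp_rw [hlucky]
  rw [card_upSteps_from_axis_eq_card_axis_visits hpre, ← hlen]
  exact card_filter_range_eq_card_filter_Icc _ (by rw [List.take_zero, List.take_length, hbal]; rfl)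
end

section
/- Let α ∈ PF_n(id) (i.e., αᵢ ≤ i for all i) and let dᵢ = i − αᵢ. In the probabilistic open-boundary parking model with p = 1/2, the probability that all n cars park (each car i, starting a symmetric random walk at αᵢ on {0,…,i} with spots 1,…,i−1 occupied, reaches i before 0) equals ∏_{i=1}^{n} αᵢ/i, i.e., (∏ᵢ αᵢ)/n!. -/
/-!
A function harmonic for the symmetric walk on `{0, …, N}` has constant increments, so with
boundary values `0` at `0` and `1` at `N` it is `s ↦ s / N` (gambler's ruin). Hence car `i`
parks with probability `αᵢ / i`, and the denominators multiply to `n!`.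
-/

section GamblersRuin

variable {K : Type*} [Field K] [CharZero K] {N : ℕ} {w : ℕ → K}

theorem eq_mul_of_gamblersRuin (h0 : w 0 = 0)
    (hrec : ∀ s, 0 < s → s < N → w s = (1 / 2) * w (s + 1) + (1 / 2) * w (s - 1)) :
    ∀ s ≤ N, w s = s * w 1 := by
  intro s
  induction s using Nat.twoStepInduction with
  | zero => simp [h0]
  | one => simp
  | more s ih₀ ih₁ =>
    intro hs
    have hmid := hrec (s + 1) (by omega) (by omega)
    rw [Nat.add_sub_cancel] at hmid
    push_cast at ih₀ ih₁ ⊢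
    linear_combination (-2 : K) * hmid + 2 * ih₁ (by omega) - ih₀ (by omega)

theorem eq_div_of_gamblersRuin (h0 : w 0 = 0) (hN : w N = 1)
    (hrec : ∀ s, 0 < s → s < N → w s = (1 / 2) * w (s + 1) + (1 / 2) * w (s - 1)) :
    ∀ s ≤ N, w s = s / N := by
  have hlin := eq_mul_of_gamblersRuin h0 hrec
  have hN0 : N ≠ 0 := by
    rintro rfl
    simp [h0] at hN
  have hw1 : w 1 = 1 / N := by
    rw [eq_div_iff (Nat.cast_ne_zero.mpr hN0), mul_comm, ← hlin N le_rfl, hN]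
  intro s hs
  rw [hlin s hs, hw1, mul_one_div]

end GamblersRuin

theorem Fin.prod_univ_add_one_eq_factorial (n : ℕ) : ∏ i : Fin n, ((i : ℕ) + 1) = n.factorial := by
  rw [Fin.prod_univ_eq_prod_range (· + 1), Finset.prod_range_add_one_eq_factorial]

/-- Open-boundary probabilistic parking with `p = 1/2`: let `α ∈ PF_n(id)`
(1-indexed: car `i` has preference `α i` with `1 ≤ α i ≤ i`), and for each car `i`
let `w i s` be the probability that a symmetric ±1 walk started at `s` on
`{0,…,i}` hits `i` before `0` (characterized by the gambler's ruin system).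
Then the probability that all cars park, `∏ᵢ w i (αᵢ)`, equals `∏ᵢ αᵢ/i`,
which equals `(∏ᵢ αᵢ)/n!`. -/
theorem stmt18 (n : ℕ) (α : Fin n → ℕ)
    (hα : ∀ i : Fin n, 1 ≤ α i ∧ α i ≤ (i : ℕ) + 1)
    (w : Fin n → ℕ → ℝ)
    (hw0 : ∀ i, w i 0 = 0) (hwi : ∀ i : Fin n, w i ((i : ℕ) + 1) = 1)
    (hrec : ∀ i : Fin n, ∀ s, 0 < s → s < (i : ℕ) + 1 →
      w i s = (1 / 2) * w i (s + 1) + (1 / 2) * w i (s - 1)) :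
    ∏ i : Fin n, w i (α i) = ∏ i : Fin n, (α i : ℝ) / ((i : ℕ) + 1 : ℝ) ∧
      ∏ i : Fin n, (α i : ℝ) / ((i : ℕ) + 1 : ℝ) =
        (∏ i : Fin n, (α i : ℝ)) / (n.factorial : ℝ) := by
  refine ⟨Finset.prod_congr rfl fun i _ => ?_, ?_⟩
  · exact_mod_cast eq_div_of_gamblersRuin (hw0 i) (hwi i) (hrec i) (α i) (hα i).2
  · rw [Finset.prod_div_distrib, ← Fin.prod_univ_add_one_eq_factorial]
    push_cast
    rfl
end
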